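/- For a pure bipartite state |ψ⟩ on A⊗B, the conditional min-entropy equals minus twice the logarithm of the trace of the square root of the reduced state: H_min(A|B)_ψ = −2 log₂ tr[√(ψ^A)] = −2 log₂ tr[√(ψ^B)]. -/

import Mathlib

open scoped Matrix Kronecker ComplexOrder
open Matrix MeasureTheory

noncomputable section

/-- The positive semidefinite square root of a positive semidefinite matrix, as defined in the
older Mathlib (`Matrix.PosSemidef.sqrt`, since removed). -/
def Matrix.PosSemidef.sqrt {n 𝕜 : Type*} [Fintype n] [DecidableEq n] [RCLike 𝕜]
    {A : Matrix n n 𝕜} (hA : A.PosSemidef) : Matrix n n 𝕜 :=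
  hA.1.eigenvectorUnitary.1 * diagonal ((↑) ∘ (Real.sqrt ∘ hA.1.eigenvalues)) *
  (star hA.1.eigenvectorUnitary : Matrix n n 𝕜)

def traceNorm {n : Type*} [Fintype n] [DecidableEq n] (A : Matrix n n ℂ) : ℝ :=
  ((Matrix.posSemidef_conjTranspose_mul_self A).sqrt.trace).re

def IsDensity {n : Type*} [Fintype n] (ρ : Matrix n n ℂ) : Prop :=
  ρ.PosSemidef ∧ ρ.trace = 1

def ptraceB {a b : Type*} [Fintype b] (M : Matrix (a × b) (a × b) ℂ) : Matrix a a ℂ :=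
  Matrix.of fun i j => ∑ x : b, M (i, x) (j, x)

def ptraceA {a b : Type*} [Fintype a] (M : Matrix (a × b) (a × b) ℂ) : Matrix b b ℂ :=
  Matrix.of fun i j => ∑ x : a, M (x, i) (x, j)

def condMinEntropy {x c : Type*} [Fintype x] [DecidableEq x] [Fintype c] [DecidableEq c]
    (ρ : Matrix (x × c) (x × c) ℂ) : ℝ :=
  sSup {l : ℝ | ∃ σ : Matrix c c ℂ, IsDensity σ ∧
    ((((2:ℝ) ^ (-l) : ℝ) : ℂ) • ((1 : Matrix x x ℂ) ⊗ₖ σ) - ρ).PosSemidef}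

def outer {n : Type*} (v : n → ℂ) : Matrix n n ℂ :=
  Matrix.of fun i j => v i * star (v j)

set_option linter.unusedSectionVars false

namespace CME

variable {a b : Type*} [Fintype a] [DecidableEq a] [Fintype b] [DecidableEq b]

open scoped MatrixOrder in
lemma psd_sqrt_eq_cfc {n : Type*} [Fintype n] [DecidableEq n] {A : Matrix n n ℂ}
    (hA : A.PosSemidef) : hA.sqrt = CFC.sqrt A := by
  rw [CFC.sqrt_eq_cfc, cfc_nnreal_eq_real _ A hA.nonneg, hA.1.cfc_eq]
  simp only [IsHermitian.cfc, Matrix.PosSemidef.sqrt, Real.coe_sqrt, Real.coe_toNNReal',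
    Unitary.conjStarAlgAut_apply]
  congr 3
  funext i
  simp [max_eq_left (hA.eigenvalues_nonneg i)]

open scoped MatrixOrder in
lemma psd_eq_sqrt_of_sq_eq {n : Type*} [Fintype n] [DecidableEq n] {A B : Matrix n n ℂ}
    (hB : B.PosSemidef) (hA : A.PosSemidef) (h : B ^ 2 = A) : B = hA.sqrt := by
  rw [psd_sqrt_eq_cfc]
  exact (CFC.sqrt_unique (by rw [← pow_two]; exact h) hB.nonneg).symm

open scoped MatrixOrder in
lemma psd_posSemidef_sqrt {n : Type*} [Fintype n] [DecidableEq n] {A : Matrix n n ℂ}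
    (hA : A.PosSemidef) : hA.sqrt.PosSemidef := by
  rw [psd_sqrt_eq_cfc]
  exact (CFC.sqrt_nonneg A).posSemidef

/-- rotated coordinates of a vector with respect to `U` -/
def rotc (U : Matrix b b ℂ) (w : b → ℂ) (i : b) : ℂ := ∑ j, w j * star (U j i)

lemma unitary_entry_sum {U : Matrix b b ℂ} (hU : U * Uᴴ = 1) (j j' : b) :
    ∑ i, U j i * star (U j' i) = if j = j' then 1 else 0 := by
  have := congrFun (congrFun hU j) j'
  simpa [Matrix.mul_apply, Matrix.one_apply, conjTranspose_apply] using this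

lemma unitary_entry_sum' {U : Matrix b b ℂ} (hU : Uᴴ * U = 1) (i i' : b) :
    ∑ j, star (U j i) * U j i' = if i = i' then 1 else 0 := by
  have := congrFun (congrFun hU i) i'
  simpa [Matrix.mul_apply, Matrix.one_apply, conjTranspose_apply] using this

lemma rot_inner (U : Matrix b b ℂ) (hU : U * Uᴴ = 1) (w v : b → ℂ) :
    ∑ i, star (rotc U w i) * rotc U v i = ∑ j, star (w j) * v j := by
  calc ∑ i, star (rotc U w i) * rotc U v i
      = ∑ i, ∑ j, ∑ j', (star (w j) * v j') * (U j i * star (U j' i)) := by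
        refine Finset.sum_congr rfl fun i _ => ?_
        simp only [rotc, star_sum, star_mul', star_star, Finset.sum_mul_sum]
        exact Finset.sum_congr rfl fun j _ => Finset.sum_congr rfl fun j' _ => by ring
    _ = ∑ j, ∑ j', (star (w j) * v j') * ∑ i, (U j i * star (U j' i)) := by
        rw [Finset.sum_comm]
        refine Finset.sum_congr rfl fun j _ => ?_
        rw [Finset.sum_comm]
        exact Finset.sum_congr rfl fun j' _ => (Finset.mul_sum _ _ _).symm
    _ = ∑ j, star (w j) * v j := by
        simp only [unitary_entry_sum hU, mul_ite, mul_one, mul_zero]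
        exact Finset.sum_congr rfl fun j _ => by simp

lemma rot_recover (U : Matrix b b ℂ) (hU : U * Uᴴ = 1) (w : b → ℂ) (j : b) :
    ∑ i, rotc U w i * U j i = w j := by
  calc ∑ i, rotc U w i * U j i
      = ∑ i, ∑ j', w j' * (star (U j' i) * U j i) := by
        refine Finset.sum_congr rfl fun i _ => ?_
        simp only [rotc, Finset.sum_mul]
        exact Finset.sum_congr rfl fun j' _ => by ring
    _ = ∑ j', w j' * ∑ i, (U j i * star (U j' i)) := by
        rw [Finset.sum_comm]
        refine Finset.sum_congr rfl fun j' _ => ?_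
        rw [Finset.mul_sum]
        exact Finset.sum_congr rfl fun i _ => by ring
    _ = w j := by
        simp only [unitary_entry_sum hU]
        simp [Finset.sum_ite_eq, mul_ite]

lemma rot_of_span (U : Matrix b b ℂ) (hU : Uᴴ * U = 1) (A : b → ℂ) (i : b) :
    rotc U (fun j => ∑ k, A k * U j k) i = A i := by
  calc rotc U (fun j => ∑ k, A k * U j k) i
      = ∑ j, ∑ k, A k * (U j k * star (U j i)) := by
        simp only [rotc, Finset.sum_mul]
        exact Finset.sum_congr rfl fun j _ => Finset.sum_congr rfl fun k _ => by ring
    _ = ∑ k, A k * ∑ j, (star (U j i) * U j k) := by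
        rw [Finset.sum_comm]
        refine Finset.sum_congr rfl fun k _ => ?_
        rw [Finset.mul_sum]
        exact Finset.sum_congr rfl fun j _ => by ring
    _ = A i := by
        simp only [unitary_entry_sum' hU]
        simp [Finset.sum_ite_eq, eq_comm]

lemma rot_qf (U : Matrix b b ℂ) (hU : U * Uᴴ = 1) (σ : Matrix b b ℂ) (w : b → ℂ) :
    star w ⬝ᵥ (σ *ᵥ w) = star (rotc U w) ⬝ᵥ ((Uᴴ * σ * U) *ᵥ rotc U w) := by
  have hr : rotc U w = Uᴴ *ᵥ w := by
    funext k
    simp [rotc, mulVec, dotProduct, conjTranspose_apply, mul_comm]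
  have hw : U *ᵥ rotc U w = w := by
    rw [hr, mulVec_mulVec, hU, one_mulVec]
  conv_lhs => rw [← hw]
  rw [star_mulVec, mulVec_mulVec, dotProduct_mulVec, vecMul_vecMul,
    dotProduct_mulVec, Matrix.mul_assoc]

lemma diag_qf (μ : b → ℝ) (r : b → ℂ) :
    star r ⬝ᵥ ((diagonal (fun k => (μ k : ℂ))) *ᵥ r)
      = ((∑ k, μ k * Complex.normSq (r k) : ℝ) : ℂ) := by
  push_cast
  simp only [dotProduct, mulVec_diagonal, Pi.star_apply]
  refine Finset.sum_congr rfl fun k _ => ?_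
  have : star (r k) * r k = (Complex.normSq (r k) : ℂ) := by
    rw [Complex.star_def, mul_comm, Complex.mul_conj]
  calc star (r k) * ((μ k : ℂ) * r k) = (μ k : ℂ) * (star (r k) * r k) := by ring
    _ = (μ k : ℂ) * (Complex.normSq (r k) : ℂ) := by rw [this]

lemma kron_qf (S : Matrix b b ℂ) (v : a × b → ℂ) :
    star v ⬝ᵥ (((1 : Matrix a a ℂ) ⊗ₖ S) *ᵥ v)
      = ∑ x : a, star (fun j => v (x, j)) ⬝ᵥ (S *ᵥ fun j => v (x, j)) := by
  simp only [dotProduct, mulVec, Pi.star_apply]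
  rw [Fintype.sum_prod_type]
  refine Finset.sum_congr rfl fun x _ => Finset.sum_congr rfl fun i _ => ?_
  congr 1
  rw [Fintype.sum_prod_type]
  simp only [kroneckerMap_apply, Matrix.one_apply, dotProduct]
  rw [Finset.sum_eq_single x]
  · simp
  · intro y _ hy
    simp [Ne.symm hy]
  · simp

lemma outer_qf (ψ v : a × b → ℂ) :
    star v ⬝ᵥ (outer ψ *ᵥ v) = star (star ψ ⬝ᵥ v) * (star ψ ⬝ᵥ v) := by
  simp only [dotProduct, mulVec, outer, Matrix.of_apply, Pi.star_apply, star_sum, star_mul',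
    star_star]
  rw [Finset.sum_mul]
  refine Finset.sum_congr rfl fun p _ => ?_
  rw [Finset.mul_sum, Finset.mul_sum]
  refine Finset.sum_congr rfl fun q _ => by ring

lemma outer_herm (ψ : a × b → ℂ) : (outer ψ).IsHermitian := by
  ext i j
  simp [outer, conjTranspose_apply, mul_comm]

lemma kron_herm {S : Matrix b b ℂ} (hS : S.IsHermitian) :
    ((1 : Matrix a a ℂ) ⊗ₖ S).IsHermitian := by
  ext ⟨x, i⟩ ⟨y, j⟩
  have := congrFun (congrFun hS i) j
  simp only [conjTranspose_apply, kroneckerMap_apply, Matrix.one_apply, star_mul'] at this ⊢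
  by_cases h : x = y
  · subst h
    simp [this]
  · simp [h, Ne.symm h]

/-- the matrix of the bipartite vector -/
def Psi (ψ : a × b → ℂ) : Matrix a b ℂ := Matrix.of fun x j => ψ (x, j)

/-- the rotated coefficient matrix -/
def Cm (U : Matrix b b ℂ) (ψ : a × b → ℂ) : Matrix a b ℂ :=
  Matrix.of fun x i => rotc U (fun j => ψ (x, j)) i

lemma Cm_eq (U : Matrix b b ℂ) (ψ : a × b → ℂ) :
    Cm U ψ = Psi ψ * U.map (starRingEnd ℂ) := by
  ext x i
  simp [Cm, Psi, rotc, Matrix.mul_apply, Matrix.map_apply, Complex.star_def]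

lemma ptraceB_outer (ψ : a × b → ℂ) :
    ptraceB (outer ψ) = Psi ψ * (Psi ψ)ᴴ := by
  ext x y
  simp [ptraceB, outer, Psi, Matrix.mul_apply, conjTranspose_apply]

lemma CmH_Cm (U : Matrix b b ℂ) (ψ : a × b → ℂ) (lam : b → ℝ)
    (hspec : ptraceA (outer ψ) = U * diagonal (fun i => (lam i : ℂ)) * Uᴴ)
    (hU2 : Uᴴ * U = 1) :
    (Cm U ψ)ᴴ * Cm U ψ = diagonal (fun i => (lam i : ℂ)) := by
  have h1 : ((U.map (starRingEnd ℂ))ᴴ : Matrix b b ℂ) = Uᵀ := by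
    ext i j; simp [conjTranspose_apply, Matrix.map_apply]
  have h2 : ((Psi ψ)ᴴ * Psi ψ : Matrix b b ℂ) = (ptraceA (outer ψ)).map (starRingEnd ℂ) := by
    ext i j
    simp [ptraceA, outer, Psi, Matrix.mul_apply, conjTranspose_apply, Matrix.map_apply,
      Complex.star_def, mul_comm]
  have h3 : (Uᴴ).map (starRingEnd ℂ) = Uᵀ := by
    ext i j; simp [conjTranspose_apply, Matrix.map_apply]
  calc (Cm U ψ)ᴴ * Cm U ψ
      = (U.map (starRingEnd ℂ))ᴴ * ((Psi ψ)ᴴ * Psi ψ) * U.map (starRingEnd ℂ) := by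
        rw [Cm_eq, conjTranspose_mul]
        simp only [Matrix.mul_assoc]
    _ = Uᵀ * (ptraceA (outer ψ)).map (starRingEnd ℂ) * U.map (starRingEnd ℂ) := by
        rw [h1, h2]
    _ = ((Uᴴ * ptraceA (outer ψ) * U)).map (starRingEnd ℂ) := by
        rw [Matrix.map_mul, Matrix.map_mul, h3]
    _ = diagonal (fun i => (lam i : ℂ)) := by
        rw [hspec]
        have : Uᴴ * (U * diagonal (fun i => (lam i : ℂ)) * Uᴴ) * U
            = diagonal (fun i => (lam i : ℂ)) := by
          calc Uᴴ * (U * diagonal (fun i => (lam i : ℂ)) * Uᴴ) * U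
              = (Uᴴ * U) * diagonal (fun i => (lam i : ℂ)) * (Uᴴ * U) := by
                simp only [Matrix.mul_assoc]
            _ = diagonal (fun i => (lam i : ℂ)) := by rw [hU2]; simp
        rw [this]
        ext i j
        simp [diagonal, Matrix.map_apply]
        split <;> simp

lemma Psi_eq (U : Matrix b b ℂ) (hU1 : U * Uᴴ = 1) (ψ : a × b → ℂ) :
    Psi ψ = Cm U ψ * Uᵀ := by
  ext x j
  rw [Matrix.mul_apply]
  simp only [Psi, Cm, Matrix.of_apply, Matrix.transpose_apply]
  exact (rot_recover U hU1 (fun j => ψ (x, j)) j).symm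

lemma ptraceB_eq_Cm (U : Matrix b b ℂ) (hU1 : U * Uᴴ = 1) (hU2 : Uᴴ * U = 1) (ψ : a × b → ℂ) :
    ptraceB (outer ψ) = Cm U ψ * (Cm U ψ)ᴴ := by
  have hT : Uᵀ * (Uᵀ)ᴴ = 1 := by
    have : (Uᵀ)ᴴ = (Uᴴ)ᵀ := by ext i j; simp [conjTranspose_apply]
    rw [this, ← Matrix.transpose_mul, hU2, Matrix.transpose_one]
  rw [ptraceB_outer, Psi_eq U hU1 ψ, conjTranspose_mul]
  calc Cm U ψ * Uᵀ * ((Uᵀ)ᴴ * (Cm U ψ)ᴴ) = Cm U ψ * (Uᵀ * (Uᵀ)ᴴ) * (Cm U ψ)ᴴ := by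
        simp only [Matrix.mul_assoc]
    _ = Cm U ψ * (Cm U ψ)ᴴ := by rw [hT]; simp

lemma trace_sqrt_CCH (C : Matrix a b ℂ) (lam : b → ℝ) (hlam : ∀ i, 0 ≤ lam i)
    (hCC : Cᴴ * C = diagonal (fun i => (lam i : ℂ)))
    {M : Matrix a a ℂ} (hM : M = C * Cᴴ) (hPSD : M.PosSemidef) :
    hPSD.sqrt.trace = ((∑ i, Real.sqrt (lam i) : ℝ) : ℂ) := by
  set g : b → ℝ := fun i => if lam i = 0 then 0 else (Real.sqrt (lam i))⁻¹ with hg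
  have hgnn : ∀ i, 0 ≤ g i := by
    intro i; rw [hg]; dsimp only
    split
    · exact le_refl 0
    · positivity
  set N : Matrix a b ℂ := C * diagonal (fun i => (Real.sqrt (g i) : ℂ)) with hNdef
  set S : Matrix a a ℂ := C * diagonal (fun i => (g i : ℂ)) * Cᴴ with hSdef
  have hstar : star (fun i => (Real.sqrt (g i) : ℂ)) = fun i => (Real.sqrt (g i) : ℂ) := by
    funext i; simp [Complex.star_def, Complex.conj_ofReal]
  have hNN : N * Nᴴ = S := by
    rw [hNdef, hSdef, conjTranspose_mul, diagonal_conjTranspose, hstar]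
    calc C * diagonal (fun i => (Real.sqrt (g i) : ℂ)) *
          (diagonal (fun i => (Real.sqrt (g i) : ℂ)) * Cᴴ)
        = C * (diagonal (fun i => (Real.sqrt (g i) : ℂ)) *
            diagonal (fun i => (Real.sqrt (g i) : ℂ))) * Cᴴ := by
          simp only [Matrix.mul_assoc]
      _ = C * diagonal (fun i => (g i : ℂ)) * Cᴴ := by
          rw [diagonal_mul_diagonal]
          have : (fun i => (Real.sqrt (g i) : ℂ) * (Real.sqrt (g i) : ℂ))
              = fun i => ((g i : ℝ) : ℂ) := by
            funext i
            rw [← Complex.ofReal_mul, Real.mul_self_sqrt (hgnn i)]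
          rw [this]
  have hS : S.PosSemidef := hNN ▸ posSemidef_self_mul_conjTranspose N
  -- columns of C vanish where lam vanishes
  have hzero : ∀ (i : b), lam i = 0 → ∀ x, C x i = 0 := by
    intro i hi x
    have hd := congrFun (congrFun hCC i) i
    rw [Matrix.mul_apply] at hd
    simp only [conjTranspose_apply, diagonal_apply_eq, hi, Complex.ofReal_zero] at hd
    have hre : ∑ x, Complex.normSq (C x i) = 0 := by
      have := congrArg Complex.re hd
      simpa [Complex.normSq_eq_conj_mul_self, Complex.re_sum, Complex.normSq_apply] using this
    have := (Finset.sum_eq_zero_iff_of_nonneg (fun x _ => Complex.normSq_nonneg (C x i))).mp hre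
    exact Complex.normSq_eq_zero.mp (this x (Finset.mem_univ x))
  -- C * diag (g * lam * g) = C
  have hCe : C * diagonal (fun i => ((g i * lam i * g i : ℝ) : ℂ)) = C := by
    ext x i
    rw [Matrix.mul_apply]
    rw [Finset.sum_eq_single i]
    · rw [diagonal_apply_eq]
      by_cases hi : lam i = 0
      · rw [hzero i hi x]; ring
      · have hs : Real.sqrt (lam i) ≠ 0 :=
          Real.sqrt_ne_zero'.mpr (lt_of_le_of_ne (hlam i) (Ne.symm hi))
        have : g i * lam i * g i = 1 := by
          rw [hg]; dsimp only
          rw [if_neg hi]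
          rw [← Real.mul_self_sqrt (hlam i)]
          field_simp
          rw [Real.sqrt_sq (Real.sqrt_nonneg _)]
        rw [this]; simp
    · intro j _ hj; rw [diagonal_apply_ne _ hj]; ring
    · intro h; exact absurd (Finset.mem_univ i) h
  have hsq : S ^ 2 = M := by
    rw [pow_two, hSdef, hM]
    calc C * diagonal (fun i => (g i : ℂ)) * Cᴴ * (C * diagonal (fun i => (g i : ℂ)) * Cᴴ)
        = C * (diagonal (fun i => (g i : ℂ)) * (Cᴴ * C) * diagonal (fun i => (g i : ℂ))) * Cᴴ := by
          simp only [Matrix.mul_assoc]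
      _ = C * diagonal (fun i => ((g i * lam i * g i : ℝ) : ℂ)) * Cᴴ := by
          rw [hCC, diagonal_mul_diagonal, diagonal_mul_diagonal]
          congr 2
          funext i
          push_cast
          ring
      _ = C * Cᴴ := by rw [hCe]
  have hSsqrt : S = hPSD.sqrt := psd_eq_sqrt_of_sq_eq hS hPSD hsq
  rw [← hSsqrt, hSdef]
  rw [Matrix.trace_mul_cycle, Matrix.mul_assoc, ← Matrix.mul_assoc, hCC,
    diagonal_mul_diagonal, trace_diagonal]
  push_cast
  refine Finset.sum_congr rfl fun i _ => ?_
  rw [← Complex.ofReal_mul]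
  congr 1
  by_cases hi : lam i = 0
  · simp [hg, hi]
  · have hs : Real.sqrt (lam i) ≠ 0 :=
      Real.sqrt_ne_zero'.mpr (lt_of_le_of_ne (hlam i) (Ne.symm hi))
    rw [hg]; dsimp only; rw [if_neg hi]
    rw [← Real.mul_self_sqrt (hlam i)]
    field_simp
    rw [Real.sqrt_sq (Real.sqrt_nonneg _)]

-- real Cauchy-Schwarz core for achievability
lemma real_CS (lam : b → ℝ) (hlam : ∀ i, 0 ≤ lam i) (c d : a → b → ℂ)
    (hc : ∀ k, ∑ x, Complex.normSq (c x k) = lam k) :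
    Complex.normSq (∑ x, ∑ k, star (c x k) * d x k)
      ≤ (∑ i, Real.sqrt (lam i)) * ∑ x, ∑ k, Real.sqrt (lam k) * Complex.normSq (d x k) := by
  set z := ∑ x, ∑ k, star (c x k) * d x k with hz
  set nd : b → ℝ := fun k => ∑ x, Complex.normSq (d x k) with hnd
  have hndnn : ∀ k, 0 ≤ nd k := fun k => Finset.sum_nonneg fun x _ => Complex.normSq_nonneg _
  -- step 2 : per-k Cauchy-Schwarz
  have step2 : ∀ k, ‖∑ x, star (c x k) * d x k‖
      ≤ Real.sqrt (lam k) * Real.sqrt (nd k) := by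
    intro k
    have h1 : ‖∑ x, star (c x k) * d x k‖
        ≤ ∑ x, ‖c x k‖ * ‖d x k‖ := by
      refine le_trans (norm_sum_le _ _) ?_
      refine Finset.sum_le_sum fun x _ => ?_
      rw [norm_mul]
      have : ‖star (c x k)‖ = ‖c x k‖ := by
        rw [Complex.star_def, Complex.norm_conj]
      rw [this]
    have h2 : (∑ x, ‖c x k‖ * ‖d x k‖) ^ 2
        ≤ (∑ x, ‖c x k‖ ^ 2) * (∑ x, ‖d x k‖ ^ 2) :=
      Finset.sum_mul_sq_le_sq_mul_sq _ _ _
    have h3 : (∑ x, ‖c x k‖ ^ 2) = lam k := by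
      rw [← hc k]; exact Finset.sum_congr rfl fun x _ => Complex.sq_norm _
    have h4 : (∑ x, ‖d x k‖ ^ 2) = nd k := by
      rw [hnd]; exact Finset.sum_congr rfl fun x _ => Complex.sq_norm _
    rw [h3, h4] at h2
    refine le_trans h1 ?_
    rw [← Real.sqrt_mul (hlam k)]
    rw [Real.le_sqrt (Finset.sum_nonneg fun x _ =>
      mul_nonneg (norm_nonneg _) (norm_nonneg _))]
    · exact h2
    · exact mul_nonneg (hlam k) (hndnn k)
  -- step 1 : triangle inequality over k
  have step1 : ‖z‖ ≤ ∑ k, Real.sqrt (lam k) * Real.sqrt (nd k) := by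
    have : z = ∑ k, ∑ x, star (c x k) * d x k := by rw [hz, Finset.sum_comm]
    rw [this]
    refine le_trans (norm_sum_le _ _) (Finset.sum_le_sum fun k _ => ?_)
    exact step2 k
  -- step 3 : outer Cauchy-Schwarz
  have step3 : (∑ k, Real.sqrt (lam k) * Real.sqrt (nd k)) ^ 2
      ≤ (∑ i, Real.sqrt (lam i)) * ∑ k, Real.sqrt (lam k) * nd k := by
    have := Finset.sum_mul_sq_le_sq_mul_sq Finset.univ
      (fun k => Real.sqrt (Real.sqrt (lam k)))
      (fun k => Real.sqrt (Real.sqrt (lam k)) * Real.sqrt (nd k))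
    have e1 : ∀ k : b, Real.sqrt (Real.sqrt (lam k)) * (Real.sqrt (Real.sqrt (lam k)) * Real.sqrt (nd k))
        = Real.sqrt (lam k) * Real.sqrt (nd k) := by
      intro k
      rw [← mul_assoc, Real.mul_self_sqrt (Real.sqrt_nonneg _)]
    have e2 : ∀ k : b, Real.sqrt (Real.sqrt (lam k)) ^ 2 = Real.sqrt (lam k) := by
      intro k; rw [Real.sq_sqrt (Real.sqrt_nonneg _)]
    have e3 : ∀ k : b, (Real.sqrt (Real.sqrt (lam k)) * Real.sqrt (nd k)) ^ 2
        = Real.sqrt (lam k) * nd k := by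
      intro k
      rw [mul_pow, Real.sq_sqrt (Real.sqrt_nonneg _), Real.sq_sqrt (hndnn k)]
    calc (∑ k, Real.sqrt (lam k) * Real.sqrt (nd k)) ^ 2
        = (∑ k, Real.sqrt (Real.sqrt (lam k)) * (Real.sqrt (Real.sqrt (lam k)) * Real.sqrt (nd k))) ^ 2 := by
          congr 1; exact Finset.sum_congr rfl fun k _ => (e1 k).symm
      _ ≤ (∑ k, Real.sqrt (Real.sqrt (lam k)) ^ 2) * ∑ k, (Real.sqrt (Real.sqrt (lam k)) * Real.sqrt (nd k)) ^ 2 := this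
      _ = (∑ i, Real.sqrt (lam i)) * ∑ k, Real.sqrt (lam k) * nd k := by
          congr 1
          · exact Finset.sum_congr rfl fun k _ => e2 k
          · exact Finset.sum_congr rfl fun k _ => e3 k
  -- combine
  have habs : Complex.normSq z = ‖z‖ ^ 2 := (Complex.sq_norm z).symm
  have hfinal : ∑ k, Real.sqrt (lam k) * nd k = ∑ x, ∑ k, Real.sqrt (lam k) * Complex.normSq (d x k) := by
    rw [Finset.sum_comm]
    exact Finset.sum_congr rfl fun k _ => by rw [hnd]; exact Finset.mul_sum _ _ _
  calc Complex.normSq z = ‖z‖ ^ 2 := habs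
    _ ≤ (∑ k, Real.sqrt (lam k) * Real.sqrt (nd k)) ^ 2 := by
        apply pow_le_pow_left₀ (norm_nonneg _) step1
    _ ≤ (∑ i, Real.sqrt (lam i)) * ∑ k, Real.sqrt (lam k) * nd k := step3
    _ = _ := by rw [hfinal]

lemma achiev_psd (ψ : a × b → ℂ) (U : Matrix b b ℂ) (hU1 : U * Uᴴ = 1) (hU2 : Uᴴ * U = 1)
    (lam : b → ℝ) (hlam : ∀ i, 0 ≤ lam i)
    (hGram : ∀ k k', ∑ x : a, star (Cm U ψ x k) * Cm U ψ x k'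
      = if k = k' then ((lam k : ℝ) : ℂ) else 0) :
    (((∑ i, Real.sqrt (lam i) : ℝ) : ℂ) • ((1 : Matrix a a ℂ) ⊗ₖ
      (U * diagonal (fun i => ((Real.sqrt (lam i) : ℝ) : ℂ)) * Uᴴ)) - outer ψ).PosSemidef := by
  set t : ℝ := ∑ i, Real.sqrt (lam i) with htdef
  set S : Matrix b b ℂ := U * diagonal (fun i => ((Real.sqrt (lam i) : ℝ) : ℂ)) * Uᴴ with hSdef
  have hSherm : S.IsHermitian := by
    rw [hSdef]
    unfold Matrix.IsHermitian
    rw [conjTranspose_mul, conjTranspose_mul, diagonal_conjTranspose, conjTranspose_conjTranspose]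
    have : star (fun i => ((Real.sqrt (lam i) : ℝ) : ℂ)) = fun i => ((Real.sqrt (lam i) : ℝ) : ℂ) := by
      funext i; simp [Complex.star_def, Complex.conj_ofReal]
    rw [this, Matrix.mul_assoc]
  apply Matrix.PosSemidef.of_dotProduct_mulVec_nonneg
  · -- Hermitian
    unfold Matrix.IsHermitian
    rw [conjTranspose_sub, conjTranspose_smul, (kron_herm hSherm).eq, (outer_herm ψ).eq,
      Complex.star_def, Complex.conj_ofReal]
  · -- quadratic form
    intro v
    have hUSU : Uᴴ * S * U = diagonal (fun i => ((Real.sqrt (lam i) : ℝ) : ℂ)) := by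
      rw [hSdef]
      calc Uᴴ * (U * diagonal (fun i => ((Real.sqrt (lam i) : ℝ) : ℂ)) * Uᴴ) * U
          = (Uᴴ * U) * diagonal (fun i => ((Real.sqrt (lam i) : ℝ) : ℂ)) * (Uᴴ * U) := by
            simp only [Matrix.mul_assoc]
        _ = _ := by rw [hU2]; simp
    -- the kron term
    have hkron : star v ⬝ᵥ (((1 : Matrix a a ℂ) ⊗ₖ S) *ᵥ v)
        = ((∑ x, ∑ k, Real.sqrt (lam k) * Complex.normSq (rotc U (fun j => v (x, j)) k) : ℝ) : ℂ) := by
      rw [kron_qf]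
      rw [Complex.ofReal_sum]
      refine Finset.sum_congr rfl fun x _ => ?_
      rw [rot_qf U hU1 S (fun j => v (x, j)), hUSU, diag_qf]
    -- the outer term
    have houter : star v ⬝ᵥ (outer ψ *ᵥ v)
        = ((Complex.normSq (∑ x, ∑ k, star (Cm U ψ x k) * rotc U (fun j => v (x, j)) k) : ℝ) : ℂ) := by
      rw [outer_qf]
      have hz : star ψ ⬝ᵥ v = ∑ x, ∑ k, star (Cm U ψ x k) * rotc U (fun j => v (x, j)) k := by
        have : star ψ ⬝ᵥ v = ∑ x : a, ∑ j : b, star (ψ (x, j)) * v (x, j) := by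
          simp only [dotProduct, Pi.star_apply]
          rw [Fintype.sum_prod_type]
        rw [this]
        refine Finset.sum_congr rfl fun x _ => ?_
        rw [← rot_inner U hU1 (fun j => ψ (x, j)) (fun j => v (x, j))]
        rfl
      rw [hz, Complex.star_def, mul_comm, Complex.mul_conj]
    rw [sub_mulVec, dotProduct_sub, smul_mulVec, dotProduct_smul, hkron, houter,
      smul_eq_mul, ← Complex.ofReal_mul, ← Complex.ofReal_sub]
    rw [Complex.zero_le_real]
    have hc : ∀ k, ∑ x, Complex.normSq (Cm U ψ x k) = lam k := by
      intro k
      have := hGram k k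
      rw [if_pos rfl] at this
      have h2 : ∀ x : a, star (Cm U ψ x k) * Cm U ψ x k = (Complex.normSq (Cm U ψ x k) : ℂ) := by
        intro x; rw [Complex.star_def, mul_comm, Complex.mul_conj]
      rw [Finset.sum_congr rfl fun x _ => h2 x] at this
      exact_mod_cast this
    have := real_CS lam hlam (fun x k => Cm U ψ x k) (fun x k => rotc U (fun j => v (x, j)) k) hc
    linarith

lemma psd_diag_entry {τ : Matrix b b ℂ} (h : τ.PosSemidef) (k : b) : 0 ≤ τ k k := by
  have := h.dotProduct_mulVec_nonneg (Pi.single k 1)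
  simpa [dotProduct, mulVec, Pi.single_apply, Finset.sum_ite_eq] using this

lemma conv_qf (C : Matrix a b ℂ) (lam : b → ℝ)
    (hGram : ∀ k k', ∑ x : a, star (C x k) * C x k' = if k = k' then ((lam k : ℝ) : ℂ) else 0)
    (τ : Matrix b b ℂ) (f : b → ℝ) :
    ∑ x : a, star (fun k => C x k * (f k : ℂ)) ⬝ᵥ (τ *ᵥ fun k => C x k * (f k : ℂ))
      = ∑ k, ((f k ^ 2 * lam k : ℝ) : ℂ) * τ k k := by
  calc ∑ x : a, star (fun k => C x k * (f k : ℂ)) ⬝ᵥ (τ *ᵥ fun k => C x k * (f k : ℂ))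
      = ∑ x : a, ∑ k, ∑ k', ((f k : ℂ) * (f k' : ℂ) * τ k k') * (star (C x k) * C x k') := by
        refine Finset.sum_congr rfl fun x _ => ?_
        simp only [dotProduct, mulVec, Pi.star_apply, star_mul', Complex.star_def,
          Complex.conj_ofReal]
        refine Finset.sum_congr rfl fun k _ => ?_
        rw [Finset.mul_sum]
        refine Finset.sum_congr rfl fun k' _ => by ring
    _ = ∑ k, ∑ k', ((f k : ℂ) * (f k' : ℂ) * τ k k') * ∑ x, (star (C x k) * C x k') := by
        rw [Finset.sum_comm]
        refine Finset.sum_congr rfl fun k _ => ?_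
        rw [Finset.sum_comm]
        exact Finset.sum_congr rfl fun k' _ => (Finset.mul_sum _ _ _).symm
    _ = ∑ k, ((f k ^ 2 * lam k : ℝ) : ℂ) * τ k k := by
        refine Finset.sum_congr rfl fun k _ => ?_
        simp only [hGram, mul_ite, mul_zero]
        rw [Finset.sum_ite_eq Finset.univ k]
        rw [if_pos (Finset.mem_univ k)]
        push_cast
        ring

lemma conv_z (ψ : a × b → ℂ) (U : Matrix b b ℂ) (hU1 : U * Uᴴ = 1) (hU2 : Uᴴ * U = 1)
    (lam : b → ℝ)
    (hGram : ∀ k k', ∑ x : a, star (Cm U ψ x k) * Cm U ψ x k'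
      = if k = k' then ((lam k : ℝ) : ℂ) else 0) (f : b → ℝ) :
    star ψ ⬝ᵥ (fun p : a × b => ∑ k, Cm U ψ p.1 k * (f k : ℂ) * U p.2 k)
      = ((∑ k, f k * lam k : ℝ) : ℂ) := by
  have hrot : ∀ x : a, rotc U (fun j => ∑ k, Cm U ψ x k * (f k : ℂ) * U j k)
      = fun k => Cm U ψ x k * (f k : ℂ) := by
    intro x; funext k
    have : (fun j => ∑ k, Cm U ψ x k * (f k : ℂ) * U j k)
        = fun j => ∑ k, (Cm U ψ x k * (f k : ℂ)) * U j k := rfl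
    rw [this, rot_of_span U hU2]
  calc star ψ ⬝ᵥ (fun p : a × b => ∑ k, Cm U ψ p.1 k * (f k : ℂ) * U p.2 k)
      = ∑ x : a, ∑ j : b, star (ψ (x, j)) * ∑ k, Cm U ψ x k * (f k : ℂ) * U j k := by
        simp only [dotProduct, Pi.star_apply]
        rw [Fintype.sum_prod_type]
    _ = ∑ x : a, ∑ k, star (Cm U ψ x k) * (Cm U ψ x k * (f k : ℂ)) := by
        refine Finset.sum_congr rfl fun x _ => ?_
        have h1 := rot_inner U hU1 (fun j => ψ (x, j))
          (fun j => ∑ k, Cm U ψ x k * (f k : ℂ) * U j k)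
        rw [hrot x] at h1
        have h2 : ∀ k, rotc U (fun j => ψ (x, j)) k = Cm U ψ x k := fun k => rfl
        rw [← h1]
        exact Finset.sum_congr rfl fun k _ => by rw [h2]
    _ = ∑ k, (f k : ℂ) * ∑ x, star (Cm U ψ x k) * Cm U ψ x k := by
        rw [Finset.sum_comm]
        refine Finset.sum_congr rfl fun k _ => ?_
        rw [Finset.mul_sum]
        exact Finset.sum_congr rfl fun x _ => by ring
    _ = ((∑ k, f k * lam k : ℝ) : ℂ) := by
        push_cast
        refine Finset.sum_congr rfl fun k _ => ?_
        rw [hGram k k, if_pos rfl]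

lemma conv_real (lam q : b → ℝ) (hlam : ∀ i, 0 ≤ lam i) (hq : ∀ i, 0 ≤ q i)
    (hsum1 : ∑ i, lam i = 1) (hqsum : ∑ i, q i ≤ 1) (c : ℝ)
    (H : ∀ f : b → ℝ, (∑ k, f k * lam k) ^ 2 ≤ c * ∑ k, f k ^ 2 * lam k * q k) :
    (∑ i, Real.sqrt (lam i)) ^ 2 ≤ c := by
  have hpos : ∀ k, 0 < lam k → 0 < q k := by
    intro k hk
    by_contra h
    have hq0 : q k = 0 := le_antisymm (not_lt.mp h) (hq k)
    have := H (fun j => if j = k then 1 else 0)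
    have e1 : ∑ j, (if j = k then (1:ℝ) else 0) * lam j = lam k := by
      rw [Finset.sum_eq_single k] <;> simp +contextual
    have e2 : ∑ j, (if j = k then (1:ℝ) else 0) ^ 2 * lam j * q j = lam k * q k := by
      rw [Finset.sum_eq_single k] <;> simp +contextual
    rw [e1, e2, hq0] at this
    nlinarith
  set f : b → ℝ := fun k => if 0 < lam k then (q k)⁻¹ else 0 with hfdef
  have hfnn : ∀ k, 0 ≤ f k := by
    intro k; rw [hfdef]; dsimp only; split
    · exact inv_nonneg.mpr (hq k)
    · exact le_refl 0
  set S : ℝ := ∑ k, f k * lam k with hSdef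
  have hfl : ∀ k, f k ^ 2 * lam k * q k = f k * lam k := by
    intro k
    by_cases hk : 0 < lam k
    · have hqk := (hpos k hk).ne'
      rw [hfdef]; dsimp only; rw [if_pos hk]
      field_simp
    · have : lam k = 0 := le_antisymm (not_lt.mp hk) (hlam k)
      simp [this]
  have HS : S ^ 2 ≤ c * S := by
    have := H f
    rwa [Finset.sum_congr rfl fun k _ => hfl k] at this
  have hSnn : 0 ≤ S := Finset.sum_nonneg fun k _ => mul_nonneg (hfnn k) (hlam k)
  obtain ⟨k0, hk0⟩ : ∃ k, 0 < lam k := by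
    by_contra h
    push_neg at h
    have : ∑ i, lam i = 0 := Finset.sum_eq_zero fun i _ => le_antisymm (h i) (hlam i)
    rw [this] at hsum1; norm_num at hsum1
  have hSpos : 0 < S := by
    have hterm : 0 < f k0 * lam k0 := by
      rw [hfdef]; dsimp only; rw [if_pos hk0]
      exact mul_pos (inv_pos.mpr (hpos k0 hk0)) hk0
    calc (0:ℝ) < f k0 * lam k0 := hterm
      _ ≤ S := Finset.single_le_sum (fun k _ => mul_nonneg (hfnn k) (hlam k)) (Finset.mem_univ k0)
  have hSc : S ≤ c := by nlinarith
  have hts : (∑ i, Real.sqrt (lam i)) ^ 2 ≤ S := by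
    have CS := Finset.sum_mul_sq_le_sq_mul_sq Finset.univ
      (fun k => Real.sqrt (lam k * f k)) (fun k => Real.sqrt (q k))
    have e4 : ∀ k : b, Real.sqrt (lam k * f k) * Real.sqrt (q k) = Real.sqrt (lam k) := by
      intro k
      by_cases hk : 0 < lam k
      · rw [← Real.sqrt_mul (mul_nonneg (hlam k) (hfnn k))]
        congr 1
        rw [hfdef]; dsimp only; rw [if_pos hk]
        have hqk := (hpos k hk).ne'
        field_simp
      · have h0 : lam k = 0 := le_antisymm (not_lt.mp hk) (hlam k)
        simp [h0]
    have e5 : ∀ k : b, Real.sqrt (lam k * f k) ^ 2 = f k * lam k := by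
      intro k
      rw [Real.sq_sqrt (mul_nonneg (hlam k) (hfnn k))]
      ring
    have e6 : ∀ k : b, Real.sqrt (q k) ^ 2 = q k := fun k => Real.sq_sqrt (hq k)
    rw [Finset.sum_congr rfl fun k _ => e4 k, Finset.sum_congr rfl fun k _ => e5 k,
      Finset.sum_congr rfl fun k _ => e6 k] at CS
    calc (∑ i, Real.sqrt (lam i)) ^ 2 ≤ S * ∑ k, q k := CS
      _ ≤ S * 1 := mul_le_mul_of_nonneg_left hqsum hSnn
      _ = S := mul_one S
  linarith

lemma converse_bound (ψ : a × b → ℂ) (U : Matrix b b ℂ) (hU1 : U * Uᴴ = 1) (hU2 : Uᴴ * U = 1)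
    (lam : b → ℝ) (hlam : ∀ i, 0 ≤ lam i)
    (hGram : ∀ k k', ∑ x : a, star (Cm U ψ x k) * Cm U ψ x k'
      = if k = k' then ((lam k : ℝ) : ℂ) else 0)
    (hsum1 : ∑ i, lam i = 1)
    (r : ℝ) (σ : Matrix b b ℂ) (hσ : IsDensity σ)
    (hpsd : (((r : ℝ) : ℂ) • ((1 : Matrix a a ℂ) ⊗ₖ σ) - outer ψ).PosSemidef) :
    (∑ i, Real.sqrt (lam i)) ^ 2 ≤ r := by
  set τ : Matrix b b ℂ := Uᴴ * σ * U with hτdef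
  have hτpsd : τ.PosSemidef := hσ.1.conjTranspose_mul_mul_same U
  have hτkk : ∀ k, τ k k = (((τ k k).re : ℝ) : ℂ) ∧ 0 ≤ (τ k k).re := by
    intro k
    have h0 := psd_diag_entry hτpsd k
    rw [Complex.le_def] at h0
    constructor
    · apply Complex.ext <;> simp [h0.2.symm]
    · simpa using h0.1
  set q : b → ℝ := fun k => (τ k k).re with hqdef
  have hq : ∀ k, 0 ≤ q k := fun k => (hτkk k).2
  have htr : τ.trace = 1 := by
    rw [hτdef, Matrix.trace_mul_cycle, hU1, Matrix.one_mul, hσ.2]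
  have hqsum : ∑ k, q k = 1 := by
    have : (τ.trace).re = 1 := by rw [htr]; simp
    rw [← this, Matrix.trace, Complex.re_sum]
    rfl
  apply conv_real lam q hlam hq hsum1 (le_of_eq hqsum) r
  intro f
  set u : a × b → ℂ := fun p => ∑ k, Cm U ψ p.1 k * (f k : ℂ) * U p.2 k with hudef
  have h0 := hpsd.dotProduct_mulVec_nonneg u
  rw [sub_mulVec, dotProduct_sub, smul_mulVec, dotProduct_smul, smul_eq_mul] at h0
  have hks : star u ⬝ᵥ (((1 : Matrix a a ℂ) ⊗ₖ σ) *ᵥ u)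
      = ((∑ k, f k ^ 2 * lam k * q k : ℝ) : ℂ) := by
    rw [kron_qf]
    have hrot : ∀ x : a, rotc U (fun j => u (x, j)) = fun k => Cm U ψ x k * (f k : ℂ) := by
      intro x; funext k
      have : (fun j => u (x, j)) = fun j => ∑ k, (Cm U ψ x k * (f k : ℂ)) * U j k := rfl
      rw [this, rot_of_span U hU2]
    calc ∑ x : a, star (fun j => u (x, j)) ⬝ᵥ (σ *ᵥ fun j => u (x, j))
        = ∑ x : a, star (fun k => Cm U ψ x k * (f k : ℂ))
            ⬝ᵥ (τ *ᵥ fun k => Cm U ψ x k * (f k : ℂ)) := by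
          refine Finset.sum_congr rfl fun x _ => ?_
          rw [rot_qf U hU1 σ, hrot x]
      _ = ∑ k, ((f k ^ 2 * lam k : ℝ) : ℂ) * τ k k := conv_qf (Cm U ψ) lam hGram τ f
      _ = ((∑ k, f k ^ 2 * lam k * q k : ℝ) : ℂ) := by
          push_cast
          refine Finset.sum_congr rfl fun k _ => ?_
          rw [(hτkk k).1]
          try push_cast
          try ring
  have hos : star u ⬝ᵥ (outer ψ *ᵥ u) = (((∑ k, f k * lam k) ^ 2 : ℝ) : ℂ) := by
    rw [outer_qf]
    rw [hudef, conv_z ψ U hU1 hU2 lam hGram f]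
    rw [Complex.star_def, Complex.conj_ofReal, ← Complex.ofReal_mul]
    push_cast
    ring
  rw [hks, hos] at h0
  have h1 : (0:ℂ) ≤ ((r * (∑ k, f k ^ 2 * lam k * q k) - (∑ k, f k * lam k) ^ 2 : ℝ) : ℂ) := by
    convert h0 using 1
    push_cast
    ring
  rw [Complex.zero_le_real] at h1
  linarith

lemma psd_smul_real {n : Type*} [Fintype n] {M : Matrix n n ℂ} (hM : M.PosSemidef) {r : ℝ}
    (hr : 0 ≤ r) : (((r : ℝ) : ℂ) • M).PosSemidef := by
  apply Matrix.PosSemidef.of_dotProduct_mulVec_nonneg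
  · unfold Matrix.IsHermitian
    rw [conjTranspose_smul, hM.1.eq, Complex.star_def, Complex.conj_ofReal]
  · intro x
    rw [smul_mulVec, dotProduct_smul, smul_eq_mul]
    exact mul_nonneg (Complex.zero_le_real.mpr hr) (hM.dotProduct_mulVec_nonneg x)

end CME

open CME in
/-- For a pure bipartite state `|ψ⟩` on `A ⊗ B`,
`H_min(A|B)_ψ = −2 log₂ tr[√(ψ^A)] = −2 log₂ tr[√(ψ^B)]`. -/
theorem condMinEntropy_pure_state
    {a b : Type*} [Fintype a] [DecidableEq a] [Fintype b] [DecidableEq b]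
    (ψ : a × b → ℂ) (hψ : ∑ i, ‖ψ i‖ ^ 2 = 1)
    (hA : (ptraceB (outer ψ)).PosSemidef) (hB : (ptraceA (outer ψ)).PosSemidef) :
    condMinEntropy (outer ψ) = -2 * Real.logb 2 ((hA.sqrt.trace).re) ∧
      condMinEntropy (outer ψ) = -2 * Real.logb 2 ((hB.sqrt.trace).re) := by
  classical
  set U : Matrix b b ℂ := (hB.1.eigenvectorUnitary : Matrix b b ℂ) with hUdef
  set lam : b → ℝ := hB.1.eigenvalues with hlamdef
  have hU1 : U * Uᴴ = 1 := by
    rw [← Matrix.star_eq_conjTranspose]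
    exact (Matrix.mem_unitaryGroup_iff).mp hB.1.eigenvectorUnitary.2
  have hU2 : Uᴴ * U = 1 := by
    rw [← Matrix.star_eq_conjTranspose]
    exact (Matrix.mem_unitaryGroup_iff').mp hB.1.eigenvectorUnitary.2
  have hspec : ptraceA (outer ψ) = U * diagonal (fun i => (lam i : ℂ)) * Uᴴ := by
    have h := hB.1.spectral_theorem
    have h2 : (RCLike.ofReal ∘ lam : b → ℂ) = fun i => (lam i : ℂ) := by
      funext i; rfl
    rw [Unitary.conjStarAlgAut_apply] at h
    rw [← Matrix.star_eq_conjTranspose, ← h2]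
    exact h
  have hlam : ∀ i, 0 ≤ lam i := fun i => hB.eigenvalues_nonneg i
  have hCC := CmH_Cm U ψ lam hspec hU2
  have hGram : ∀ k k', ∑ x : a, star (Cm U ψ x k) * Cm U ψ x k'
      = if k = k' then ((lam k : ℝ) : ℂ) else 0 := by
    intro k k'
    have h := congrFun (congrFun hCC k) k'
    rw [Matrix.mul_apply] at h
    simp only [conjTranspose_apply] at h
    rw [Matrix.diagonal_apply] at h
    exact h
  set t : ℝ := ∑ i, Real.sqrt (lam i) with htdef
  -- trace of the B-marginal is one
  have htrace1 : (ptraceA (outer ψ)).trace = 1 := by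
    have hterm : ∀ p : a × b, ψ p * star (ψ p) = ((‖ψ p‖ ^ 2 : ℝ) : ℂ) := by
      intro p
      rw [Complex.star_def, Complex.mul_conj, Complex.normSq_eq_norm_sq]
      try push_cast
      try ring
    calc (ptraceA (outer ψ)).trace
        = ∑ i : b, ∑ x : a, ψ (x, i) * star (ψ (x, i)) := by
          simp [Matrix.trace, ptraceA, outer, Matrix.diag]
      _ = ∑ p : a × b, ψ p * star (ψ p) := by
          rw [Finset.sum_comm]
          exact (Fintype.sum_prod_type (f := fun p : a × b => ψ p * star (ψ p))).symm
      _ = ((∑ p : a × b, ‖ψ p‖ ^ 2 : ℝ) : ℂ) := by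
          rw [Finset.sum_congr rfl fun p _ => hterm p]
          try push_cast
          try rfl
      _ = 1 := by rw [hψ]; simp
  have hsum1 : ∑ i, lam i = 1 := by
    have h1 : (ptraceA (outer ψ)).trace = ((∑ i, lam i : ℝ) : ℂ) := by
      rw [hspec, Matrix.trace_mul_cycle, hU2, Matrix.one_mul, Matrix.trace_diagonal]
      try push_cast
      try rfl
    rw [htrace1] at h1
    exact_mod_cast h1.symm
  have htpos : 0 < t := by
    obtain ⟨k0, hk0⟩ : ∃ k, 0 < lam k := by
      by_contra h
      push_neg at h
      have : ∑ i, lam i = 0 := Finset.sum_eq_zero fun i _ => le_antisymm (h i) (hlam i)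
      rw [this] at hsum1; norm_num at hsum1
    calc (0:ℝ) < Real.sqrt (lam k0) := Real.sqrt_pos.mpr hk0
      _ ≤ t := Finset.single_le_sum (fun k _ => Real.sqrt_nonneg _) (Finset.mem_univ k0)
  -- identification of the square roots
  have hsqrtB : hB.sqrt = U * diagonal (fun i => ((Real.sqrt (lam i) : ℝ) : ℂ)) * Uᴴ := rfl
  have htrB : hB.sqrt.trace = ((t : ℝ) : ℂ) := by
    rw [hsqrtB, Matrix.trace_mul_cycle, hU2, Matrix.one_mul, Matrix.trace_diagonal, htdef]
    try push_cast
    try rfl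
  have htrA : hA.sqrt.trace = ((t : ℝ) : ℂ) :=
    trace_sqrt_CCH (Cm U ψ) lam hlam hCC (ptraceB_eq_Cm U hU1 hU2 ψ) hA
  -- the entropy computation
  set L : ℝ := -2 * Real.logb 2 t with hLdef
  have hpow : (2:ℝ) ^ (-L) = t ^ 2 := by
    have h1 : -L = Real.logb 2 (t ^ 2) := by
      rw [Real.logb_pow]
      rw [hLdef]
      push_cast
      ring
    rw [h1, Real.rpow_logb (by norm_num) (by norm_num) (by positivity)]
  have hub : ∀ l ∈ {l : ℝ | ∃ σ : Matrix b b ℂ, IsDensity σ ∧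
      ((((2:ℝ) ^ (-l) : ℝ) : ℂ) • ((1 : Matrix a a ℂ) ⊗ₖ σ) - outer ψ).PosSemidef}, l ≤ L := by
    rintro l ⟨σ, hσ, hpsd⟩
    have hb2 := converse_bound ψ U hU1 hU2 lam hlam hGram hsum1 ((2:ℝ) ^ (-l)) σ hσ hpsd
    have h2 : Real.logb 2 (t ^ 2) ≤ -l := by
      rw [Real.logb_le_iff_le_rpow (by norm_num) (by positivity)]
      exact hb2
    rw [Real.logb_pow] at h2
    rw [hLdef]
    push_cast at h2 ⊢
    linarith
  have hmem : L ∈ {l : ℝ | ∃ σ : Matrix b b ℂ, IsDensity σ ∧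
      ((((2:ℝ) ^ (-l) : ℝ) : ℂ) • ((1 : Matrix a a ℂ) ⊗ₖ σ) - outer ψ).PosSemidef} := by
    refine ⟨((t⁻¹ : ℝ) : ℂ) • hB.sqrt, ⟨psd_smul_real (psd_posSemidef_sqrt hB) (inv_nonneg.mpr htpos.le), ?_⟩, ?_⟩
    · rw [Matrix.trace_smul, htrB, smul_eq_mul, ← Complex.ofReal_mul,
        inv_mul_cancel₀ htpos.ne']
      simp
    · have hscal : (((2:ℝ) ^ (-L) : ℝ) : ℂ) • ((1 : Matrix a a ℂ) ⊗ₖ (((t⁻¹ : ℝ) : ℂ) • hB.sqrt))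
          = ((t : ℝ) : ℂ) • ((1 : Matrix a a ℂ) ⊗ₖ hB.sqrt) := by
        rw [Matrix.kronecker_smul, smul_smul, hpow]
        congr 1
        push_cast
        field_simp
      rw [hscal, hsqrtB]
      exact achiev_psd ψ U hU1 hU2 lam hlam hGram
  have hmain : condMinEntropy (outer ψ) = L := by
    unfold condMinEntropy
    apply le_antisymm
    · exact csSup_le ⟨L, hmem⟩ hub
    · exact le_csSup ⟨L, fun l hl => hub l hl⟩ hmem
  constructor
  · rw [hmain, htrA, Complex.ofReal_re, hLdef]
  · rw [hmain, htrB, Complex.ofReal_re, hLdef]
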